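/- For every finite simple graph G with m(G) = 2^β(G), G is bipartite with bipartition (S, V(G) \ S), where S is any minimum vertex cover of G; moreover every vertex of S has a neighbor of degree 1 in G. -/

import Mathlib

variable {V : Type*}

/-- `S` is an independent set of `G`: no two vertices of `S` are adjacent. -/
def IsIndepSet (G : SimpleGraph V) (S : Set V) : Prop :=
  ∀ ⦃u v : V⦄, u ∈ S → v ∈ S → ¬ G.Adj u v

/-- `S` is a maximal independent set of `G`. -/
def IsMaxIndepSet (G : SimpleGraph V) (S : Set V) : Prop :=
  IsIndepSet G S ∧ ∀ T : Set V, IsIndepSet G T → S ⊆ T → S = T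

/-- `m(G)`: the number of maximal independent sets of `G`. -/
noncomputable def numMaxIndep (G : SimpleGraph V) : ℕ :=
  {S : Set V | IsMaxIndepSet G S}.ncard

/-- `C` is a vertex cover of `G`: every edge has at least one endpoint in `C`. -/
def IsVertexCover (G : SimpleGraph V) (C : Set V) : Prop :=
  ∀ ⦃u v : V⦄, G.Adj u v → u ∈ C ∨ v ∈ C

/-- `β(G)`: the minimum size of a vertex cover of `G`. -/
noncomputable def coverNumber (G : SimpleGraph V) : ℕ :=
  sInf {n : ℕ | ∃ C : Set V, IsVertexCover G C ∧ C.ncard = n}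

/-- `M` is a matching of `G`: a set of edges of `G`, pairwise sharing no vertex. -/
def IsMatching (G : SimpleGraph V) (M : Set (Sym2 V)) : Prop :=
  M ⊆ G.edgeSet ∧ ∀ e ∈ M, ∀ f ∈ M, e ≠ f → ∀ v : V, v ∈ e → v ∉ f

/-- `M` is an induced matching of `G`: a matching such that no two distinct
edges of `M` are joined by an edge of `G`. -/
def IsInducedMatching (G : SimpleGraph V) (M : Set (Sym2 V)) : Prop :=
  IsMatching G M ∧ ∀ e ∈ M, ∀ f ∈ M, e ≠ f → ∀ u v : V, u ∈ e → v ∈ f → ¬ G.Adj u v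

/-- `ν(G)`: the maximum size of a matching of `G`. -/
noncomputable def matchingNumber (G : SimpleGraph V) : ℕ :=
  sSup {n : ℕ | ∃ M : Set (Sym2 V), IsMatching G M ∧ M.ncard = n}

/-- `ν₀(G)`: the maximum size of an induced matching of `G`. -/
noncomputable def inducedMatchingNumber (G : SimpleGraph V) : ℕ :=
  sSup {n : ℕ | ∃ M : Set (Sym2 V), IsInducedMatching G M ∧ M.ncard = n}

/-- `G` is bipartite: the vertices split into two sides with every edge crossing. -/
def IsBipartite (G : SimpleGraph V) : Prop :=
  ∃ A : Set V, ∀ ⦃u v : V⦄, G.Adj u v → (u ∈ A ↔ v ∉ A)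

/-!
If `S` is a vertex cover, a maximal independent set `M` is determined by `M ∩ S`: a vertex
outside `S` has all its neighbours in `S`, so it lies in `M` exactly when it has no neighbour in
`M ∩ S`. Hence `M ↦ M ∩ S` is injective and `m(G) ≤ 2 ^ |S|`; equality makes it onto `𝒫 S`.
Taking `M ∩ S = S` shows that `S` is independent. Taking `M ∩ S = S \ {x}`, maximality gives a
neighbour `y ∈ M` of `x`, which lies outside `S`; its neighbours lie in `S` but not in
`M ∩ S = S \ {x}`, so `x` is the only one.
-/

variable {G : SimpleGraph V} {S M : Set V}

theorem IsMaxIndepSet.mem_iff_forall_not_adj (hM : IsMaxIndepSet G M) {v : V} :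
    v ∈ M ↔ ∀ w ∈ M, ¬ G.Adj v w := by
  refine ⟨fun hv w hw => hM.1 hv hw, fun h => ?_⟩
  have hind : IsIndepSet G (insert v M) := by
    rintro a b (rfl | ha) (rfl | hb) hab
    · exact G.loopless.irrefl _ hab
    · exact h b hb hab
    · exact h a ha hab.symm
    · exact hM.1 ha hb hab
  rw [hM.2 _ hind (Set.subset_insert v M)]
  exact Set.mem_insert v M

theorem IsMaxIndepSet.mem_iff_forall_not_adj_of_notMem_cover (hM : IsMaxIndepSet G M)
    (hS : IsVertexCover G S) {v : V} (hv : v ∉ S) :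
    v ∈ M ↔ ∀ w ∈ M ∩ S, ¬ G.Adj v w := by
  rw [hM.mem_iff_forall_not_adj]
  exact ⟨fun h w hw => h w hw.1,
    fun h w hw hvw => h w ⟨hw, (hS hvw).resolve_left hv⟩ hvw⟩

theorem IsVertexCover.injOn_inter (hS : IsVertexCover G S) :
    Set.InjOn (· ∩ S) {M : Set V | IsMaxIndepSet G M} := by
  intro M₁ h₁ M₂ h₂ h
  ext v
  by_cases hv : v ∈ S
  · simpa [hv] using congrArg (v ∈ ·) h
  · rw [h₁.mem_iff_forall_not_adj_of_notMem_cover hS hv,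
      h₂.mem_iff_forall_not_adj_of_notMem_cover hS hv, show M₁ ∩ S = M₂ ∩ S from h]

theorem IsVertexCover.exists_isMaxIndepSet_inter_eq [Finite V] (hS : IsVertexCover G S)
    (hm : numMaxIndep G = 2 ^ S.ncard) {A : Set V} (hA : A ⊆ S) :
    ∃ M, IsMaxIndepSet G M ∧ M ∩ S = A := by
  have himage : (· ∩ S) '' {M : Set V | IsMaxIndepSet G M} = 𝒫 S := by
    refine Set.eq_of_subset_of_ncard_le ?_ ?_ (Set.toFinite _)
    · rintro _ ⟨M, -, rfl⟩
      exact Set.inter_subset_right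
    · rw [hS.injOn_inter.ncard_image, Set.ncard_powerset]
      exact hm.ge
  exact himage.ge hA

theorem IsVertexCover.exists_adj_degree_eq_one [Fintype V] [DecidableRel G.Adj]
    (hS : IsVertexCover G S) (hSind : IsIndepSet G S) (hM : IsMaxIndepSet G M) {x : V}
    (hx : x ∈ S) (hMS : M ∩ S = S \ {x}) :
    ∃ y, G.Adj x y ∧ G.degree y = 1 := by
  have hxM : x ∉ M := fun h => (hMS ▸ ⟨h, hx⟩ : x ∈ S \ {x}).2 rfl
  obtain ⟨y, hyM, hxy⟩ : ∃ y ∈ M, G.Adj x y := by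
    simpa using hM.mem_iff_forall_not_adj.not.mp hxM
  have hyS : y ∉ S := fun hyS => hSind hx hyS hxy
  refine ⟨y, hxy, SimpleGraph.degree_eq_one_iff_existsUnique_adj.mpr
    ⟨x, hxy.symm, fun z hyz => ?_⟩⟩
  by_contra hzx
  have hz : z ∈ M ∩ S := hMS ▸ ⟨(hS hyz).resolve_left hyS, hzx⟩
  exact hM.1 hyM hz.1 hyz

/-- If `m(G) = 2 ^ β(G)` then for any minimum vertex cover `S`, the
pair `(S, V \\ S)` is a bipartition of `G` and every vertex of `S` has a neighbor
of degree 1. -/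
theorem bipartition_and_leaf_of_extremal [Fintype V] (G : SimpleGraph V)
    [DecidableRel G.Adj] (hm : numMaxIndep G = 2 ^ coverNumber G)
    (S : Set V) (hS : IsVertexCover G S) (hcard : S.ncard = coverNumber G) :
    (∀ u v : V, G.Adj u v → (u ∈ S ∧ v ∉ S) ∨ (u ∉ S ∧ v ∈ S)) ∧
      ∀ x ∈ S, ∃ y : V, G.Adj x y ∧ G.degree y = 1 := by
  have hm' : numMaxIndep G = 2 ^ S.ncard := hcard ▸ hm
  have hSind : IsIndepSet G S := by
    obtain ⟨M, hM, hMS⟩ := hS.exists_isMaxIndepSet_inter_eq hm' subset_rfl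
    exact fun u v hu hv => hM.1 (hMS.ge hu).1 (hMS.ge hv).1
  refine ⟨fun u v huv => ?_, fun x hx => ?_⟩
  · rcases hS huv with hu | hv
    · exact Or.inl ⟨hu, fun hv => hSind hu hv huv⟩
    · exact Or.inr ⟨fun hu => hSind hu hv huv, hv⟩
  · obtain ⟨M, hM, hMS⟩ := hS.exists_isMaxIndepSet_inter_eq hm' (Set.sdiff_subset (t := {x}))
    exact hS.exists_adj_degree_eq_one hSind hM hx hMS
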